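/- Let V = Σ_{i=0}^{d} n_i·Sym^{2i}(ℂ²) and W = Σ_{i=1}^{d} m_i·Sym^{2i−1}(ℂ²) be two finite-dimensional representations of SU(2). Then 2·[dim(V⊗V)[0] + dim(W⊗W)[0] − 2·dim(V⊗W)[1]] ≥ m_1² + m_2² + ⋯ + m_d². -/

import Mathlib

/-!
Write `a j = dim V[j]`, `b j = dim W[j]` and `e j = a j - b (j - 1)`. Both weight
multiplicities are even functions of the weight, so the bracket is `∑ⱼ e j ^ 2`. On the other
hand `b i - b (i + 2)` is the multiplicity of `Sym^i(ℂ²)` in `W`, and by evenness again this is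
`e (-(i + 1)) - e (i + 1)`. Then `(x - y) ^ 2 ≤ 2 x ^ 2 + 2 y ^ 2` bounds its square by
`2 (e (i + 1) ^ 2 + e (-(i + 1)) ^ 2)`, and these terms are disjoint parts of `∑ⱼ e j ^ 2`.
-/

/-- `wtDim ℓ k` is the dimension of the `k`-weight space (for the standard maximal torus
`S¹ ⊂ SU(2)`, acting by `z ↦ z^k`) of the representation `⊕ᵢ ℓ i · Sym^i(ℂ²)` of `SU(2)`
encoded by its multiplicity function `ℓ : ℕ → ℕ`:
`dim E[k] = Σ_{i ≥ |k|, i ≡ k (mod 2)} ℓ i`. -/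
noncomputable def wtDim (ℓ : ℕ → ℕ) (k : ℤ) : ℕ :=
  ∑ᶠ i : ℕ, if k.natAbs ≤ i ∧ k % 2 = (i : ℤ) % 2 then ℓ i else 0

/-- `tensorWtDim ℓ₁ ℓ₂ k` is the dimension of the `k`-weight space of the tensor product
of the `SU(2)`-representations encoded by `ℓ₁` and `ℓ₂`:
`dim (E⊗F)[k] = Σ_{j ∈ ℤ} dim E[j] · dim F[k-j]`. -/
noncomputable def tensorWtDim (ℓ₁ ℓ₂ : ℕ → ℕ) (k : ℤ) : ℕ :=
  ∑ᶠ j : ℤ, wtDim ℓ₁ j * wtDim ℓ₂ (k - j)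

/-- Multiplicity function of `V = Σ_{i=0}^{d} n_i · Sym^{2i}(ℂ²)`
(trivial central character). -/
def evenRep (d : ℕ) (n : ℕ → ℕ) : ℕ → ℕ :=
  fun j => if j % 2 = 0 ∧ j / 2 ≤ d then n (j / 2) else 0

/-- Multiplicity function of `W = Σ_{i=1}^{d} m_i · Sym^{2i-1}(ℂ²)`
(non-trivial central character). -/
def oddRep (d : ℕ) (m : ℕ → ℕ) : ℕ → ℕ :=
  fun j => if j % 2 = 1 ∧ (j + 1) / 2 ≤ d then m ((j + 1) / 2) else 0

open Finset Function

lemma Finset.sum_le_finsum {α M : Type*} [AddCommMonoid M] [PartialOrder M]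
    [IsOrderedAddMonoid M] {f : α → M} (s : Finset α) (hf : f.HasFiniteSupport)
    (hf₀ : ∀ a, 0 ≤ f a) : ∑ a ∈ s, f a ≤ ∑ᶠ a, f a := by
  classical
  rw [finsum_eq_sum_of_support_subset f (s := s ∪ hf.toFinset)
    fun a ha => mem_union_right _ (hf.mem_toFinset.mpr ha)]
  exact sum_le_sum_of_subset_of_nonneg subset_union_left fun a _ _ => hf₀ a

lemma sum_add_neg_le_finsum {g : ℤ → ℤ} (hg : g.HasFiniteSupport) (hg₀ : ∀ j, 0 ≤ g j)
    (s : Finset ℕ) : ∑ i ∈ s, (g (i + 1) + g (-(i + 1))) ≤ ∑ᶠ j, g j := by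
  classical
  let pos : ℕ ↪ ℤ := ⟨fun i => i + 1, fun a b h => by simpa using h⟩
  let neg : ℕ ↪ ℤ := ⟨fun i => -(i + 1), fun a b h => by simpa using h⟩
  have hdisj : Disjoint (s.map pos) (s.map neg) := by
    simp only [disjoint_left, mem_map]
    rintro _ ⟨a, -, rfl⟩ ⟨b, -, h⟩
    change -((b : ℤ) + 1) = a + 1 at h
    omega
  calc ∑ i ∈ s, (g (i + 1) + g (-(i + 1))) = ∑ j ∈ s.map pos ∪ s.map neg, g j := by
        rw [sum_union hdisj, sum_map, sum_map, sum_add_distrib]; rfl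
    _ ≤ ∑ᶠ j, g j := sum_le_finsum _ hg hg₀

lemma Nat.cast_finsum' {ι M : Type*} [AddCommMonoidWithOne M] [CharZero M] (f : ι → ℕ) :
    ((∑ᶠ i, f i : ℕ) : M) = ∑ᶠ i, (f i : M) := by
  by_cases hf : f.HasFiniteSupport
  · exact (Nat.castAddMonoidHom M).map_finsum hf
  · have hf' : ¬ (fun i => (f i : M)).HasFiniteSupport :=
      fun h => hf (h.of_comp Nat.cast_zero Nat.cast_injective)
    rw [finsum_of_not_hasFiniteSupport hf, finsum_of_not_hasFiniteSupport hf', Nat.cast_zero]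

section WeightSpaces

variable {ℓ ℓ₁ ℓ₂ : ℕ → ℕ}

lemma wtDim_neg (ℓ : ℕ → ℕ) (k : ℤ) : wtDim ℓ (-k) = wtDim ℓ k := by
  simp only [wtDim, Int.natAbs_neg, Int.neg_emod_two]

lemma hasFiniteSupport_wtDim (hℓ : ℓ.HasFiniteSupport) : (wtDim ℓ).HasFiniteSupport := by
  obtain ⟨N, hN⟩ := hℓ.bddAbove
  refine (Set.finite_Icc (-(N : ℤ)) N).subset fun k hk => ?_
  by_contra hkN
  refine hk (finsum_eq_zero_of_forall_eq_zero fun i => ?_)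
  split_ifs with hi
  · refine notMem_support.mp fun hi' => hkN ?_
    have := hN hi'
    rw [Set.mem_Icc]
    omega
  · rfl

lemma wtDim_natCast (hℓ : ℓ.HasFiniteSupport) (k : ℕ) :
    wtDim ℓ k = ℓ k + wtDim ℓ (k + 2) := by
  have hsplit : ∀ i : ℕ,
      (if (k : ℤ).natAbs ≤ i ∧ (k : ℤ) % 2 = (i : ℤ) % 2 then ℓ i else 0)
        = (if i = k then ℓ i else 0)
          + if ((k : ℤ) + 2).natAbs ≤ i ∧ ((k : ℤ) + 2) % 2 = (i : ℤ) % 2 then ℓ i else 0 := by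
    intro i
    split_ifs <;> omega
  have hsupp : ∀ p : ℕ → Prop, ∀ [DecidablePred p],
      (fun i => if p i then ℓ i else 0).HasFiniteSupport := fun p _ =>
    hℓ.subset fun i hi => by by_contra h; simp_all
  rw [wtDim, wtDim, finsum_congr hsplit, finsum_add_distrib (hsupp _) (hsupp _),
    finsum_eq_single _ k fun i hi => if_neg hi, if_pos rfl]

lemma tensorWtDim_self_zero (ℓ : ℕ → ℕ) : tensorWtDim ℓ ℓ 0 = ∑ᶠ j, wtDim ℓ j ^ 2 := by
  simp only [tensorWtDim, zero_sub, wtDim_neg, sq]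

lemma tensorWtDim_one (ℓ₁ ℓ₂ : ℕ → ℕ) :
    tensorWtDim ℓ₁ ℓ₂ 1 = ∑ᶠ j, wtDim ℓ₁ j * wtDim ℓ₂ (j - 1) := by
  simp only [tensorWtDim, ← wtDim_neg ℓ₂ (_ - 1), neg_sub]

noncomputable def wtDimDiff (ℓ₁ ℓ₂ : ℕ → ℕ) (j : ℤ) : ℤ := wtDim ℓ₁ j - wtDim ℓ₂ (j - 1)

lemma hasFiniteSupport_wtDim_cast (hℓ : ℓ.HasFiniteSupport) :
    (fun j => (wtDim ℓ j : ℤ)).HasFiniteSupport :=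
  (hasFiniteSupport_wtDim hℓ).fun_comp Nat.cast_zero

lemma hasFiniteSupport_wtDim_cast_sub_one (hℓ : ℓ.HasFiniteSupport) :
    (fun j => (wtDim ℓ (j - 1) : ℤ)).HasFiniteSupport :=
  HasFiniteSupport.fun_comp_of_injective (g := fun j : ℤ => j - 1) sub_left_injective
    (hasFiniteSupport_wtDim_cast hℓ)

lemma hasFiniteSupport_wtDimDiff (h₁ : ℓ₁.HasFiniteSupport) (h₂ : ℓ₂.HasFiniteSupport) :
    (wtDimDiff ℓ₁ ℓ₂).HasFiniteSupport :=
  (hasFiniteSupport_wtDim_cast h₁).fun_sub (hasFiniteSupport_wtDim_cast_sub_one h₂)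

theorem tensorWtDim_sub_eq_finsum_sq (h₁ : ℓ₁.HasFiniteSupport) (h₂ : ℓ₂.HasFiniteSupport) :
    (tensorWtDim ℓ₁ ℓ₁ 0 : ℤ) + tensorWtDim ℓ₂ ℓ₂ 0 - 2 * tensorWtDim ℓ₁ ℓ₂ 1
      = ∑ᶠ j, wtDimDiff ℓ₁ ℓ₂ j ^ 2 := by
  have ha := hasFiniteSupport_wtDim_cast h₁
  have hb := hasFiniteSupport_wtDim_cast_sub_one h₂
  have hshift : ∑ᶠ j, (wtDim ℓ₂ (j - 1) : ℤ) ^ 2 = ∑ᶠ j, (wtDim ℓ₂ j : ℤ) ^ 2 :=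
    finsum_comp_equiv (Equiv.subRight 1) (f := fun j => (wtDim ℓ₂ j : ℤ) ^ 2)
  rw [tensorWtDim_self_zero, tensorWtDim_self_zero, tensorWtDim_one]
  simp only [Nat.cast_finsum', Nat.cast_pow, Nat.cast_mul]
  rw [← hshift, mul_finsum]
  simp only [sq] at ha hb ⊢
  rw [← finsum_add_distrib (by fun_prop) (by fun_prop),
    ← finsum_sub_distrib (by fun_prop) (by fun_prop)]
  exact finsum_congr fun j => by rw [wtDimDiff]; ring

lemma wtDimDiff_neg_sub (h₂ : ℓ₂.HasFiniteSupport) (i : ℕ) :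
    wtDimDiff ℓ₁ ℓ₂ (-(i + 1)) - wtDimDiff ℓ₁ ℓ₂ (i + 1) = ℓ₂ i := by
  rw [wtDimDiff, wtDimDiff, wtDim_neg, show -((i : ℤ) + 1) - 1 = -((i : ℤ) + 2) by ring,
    wtDim_neg, add_sub_cancel_right, wtDim_natCast h₂]
  push_cast
  ring

theorem sum_sq_le_two_mul_tensorWtDim (h₁ : ℓ₁.HasFiniteSupport) (h₂ : ℓ₂.HasFiniteSupport)
    (s : Finset ℕ) :
    ∑ i ∈ s, (ℓ₂ i : ℤ) ^ 2 ≤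
      2 * ((tensorWtDim ℓ₁ ℓ₁ 0 : ℤ) + tensorWtDim ℓ₂ ℓ₂ 0 - 2 * tensorWtDim ℓ₁ ℓ₂ 1) := by
  set e := wtDimDiff ℓ₁ ℓ₂
  rw [tensorWtDim_sub_eq_finsum_sq h₁ h₂]
  calc ∑ i ∈ s, (ℓ₂ i : ℤ) ^ 2 = ∑ i ∈ s, (e (-(i + 1)) - e (i + 1)) ^ 2 := by
        simp only [e, wtDimDiff_neg_sub h₂]
    _ ≤ ∑ i ∈ s, 2 * (e (i + 1) ^ 2 + e (-(i + 1)) ^ 2) :=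
        sum_le_sum fun i _ => by nlinarith [sq_nonneg (e (-(i + 1)) + e (i + 1))]
    _ ≤ 2 * ∑ᶠ j, e j ^ 2 := by
        rw [← mul_sum]
        gcongr
        exact sum_add_neg_le_finsum
          ((hasFiniteSupport_wtDimDiff h₁ h₂).subset fun j hj => by simpa using hj)
          (fun j => sq_nonneg _) s

end WeightSpaces

lemma hasFiniteSupport_evenRep (d : ℕ) (n : ℕ → ℕ) : (evenRep d n).HasFiniteSupport :=
  (Set.finite_Iio (2 * d + 1)).subset fun i hi => by
    rw [mem_support, evenRep] at hi
    split_ifs at hi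
    · rw [Set.mem_Iio]; omega
    · exact absurd rfl hi

lemma hasFiniteSupport_oddRep (d : ℕ) (m : ℕ → ℕ) : (oddRep d m).HasFiniteSupport :=
  (Set.finite_Iio (2 * d)).subset fun i hi => by
    rw [mem_support, oddRep] at hi
    split_ifs at hi
    · rw [Set.mem_Iio]; omega
    · exact absurd rfl hi

lemma sum_Icc_sq_eq_sum_sq_oddRep (d : ℕ) (m : ℕ → ℕ) :
    ∑ i ∈ Icc 1 d, (m i : ℤ) ^ 2 = ∑ i ∈ (Icc 1 d).image (2 * · - 1), (oddRep d m i : ℤ) ^ 2 := by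
  rw [sum_image fun a ha b hb h => by simp only [coe_Icc, Set.mem_Icc] at ha hb h; omega]
  refine sum_congr rfl fun i hi => ?_
  rw [mem_Icc] at hi
  rw [oddRep, if_pos (by omega), show (2 * i - 1 + 1) / 2 = i by omega]

/-- For `V = Σ_{i=0}^{d} n_i·Sym^{2i}(ℂ²)` and `W = Σ_{i=1}^{d} m_i·Sym^{2i-1}(ℂ²)`,
`2·[dim(V⊗V)[0] + dim(W⊗W)[0] − 2·dim(V⊗W)[1]] ≥ m_1² + ⋯ + m_d²`. -/
theorem lower_bound_m_squares (d : ℕ) (n m : ℕ → ℕ) :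
    (∑ i ∈ Finset.Icc 1 d, (m i : ℤ) ^ 2) ≤
      2 * ((tensorWtDim (evenRep d n) (evenRep d n) 0 : ℤ)
        + tensorWtDim (oddRep d m) (oddRep d m) 0
        - 2 * tensorWtDim (evenRep d n) (oddRep d m) 1) := by
  rw [sum_Icc_sq_eq_sum_sq_oddRep]
  exact sum_sq_le_two_mul_tensorWtDim (hasFiniteSupport_evenRep d n)
    (hasFiniteSupport_oddRep d m) _
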